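/- arXiv:1710.07191 — 4 statements merged into one kernel-verified Lean document; each statement's English description precedes it below -/
import Mathlib

section
/- If Q is a subset of a finite set N of size n with |Q| ≥ ⌈(n+1)/2⌉ (a classic quorum) and F₁, F₂ are subsets with |F₁|, |F₂| ≥ ⌈3n/4⌉ (fast quorums, where each fast quorum misses at most ⌊n/4⌋ elements), then Q ∩ F₁ ∩ F₂ is nonempty. -/
/-- A classic quorum (strict majority) and any two fast quorums (each containing
at least three quarters of the nodes) have a common element. -/
theorem classic_and_two_fast_quorums_intersect {α : Type*} [DecidableEq α]
    (N Q F₁ F₂ : Finset α)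
    (hn : 0 < N.card)
    (hQ : Q ⊆ N) (hF₁ : F₁ ⊆ N) (hF₂ : F₂ ⊆ N)
    (hQc : 2 * Q.card > N.card)
    (hF₁c : 4 * F₁.card ≥ 3 * N.card)
    (hF₂c : 4 * F₂.card ≥ 3 * N.card) :
    (Q ∩ F₁ ∩ F₂).Nonempty := by
  rw [← Finset.card_pos]
  have h1 : (Q ∪ F₁).card ≤ N.card :=
    Finset.card_le_card (Finset.union_subset hQ hF₁)
  have h2 : ((Q ∩ F₁) ∪ F₂).card ≤ N.card :=
    Finset.card_le_card (Finset.union_subset (Finset.inter_subset_left.trans hQ) hF₂)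
  have e1 := Finset.card_inter_add_card_union Q F₁
  have e2 := Finset.card_inter_add_card_union (Q ∩ F₁) F₂
  omega
end

section
/- Under the Paxos inductive invariant, any two decisions agree: if decision(n₁, r₁, v₁) and decision(n₂, r₂, v₂) hold in a state satisfying the invariant conjuncts, then v₁ = v₂. -/
/-- Under the Paxos inductive invariant, any two decisions agree on the value. -/
theorem paxos_decisions_agree
    {node quorum round value : Type*} [LinearOrder round] (bot : round)
    (member : node → quorum → Prop)
    (decision vote_msg : node → round → value → Prop)
    (propose_msg : round → value → Prop)
    (left_round : node → round → Prop)
    (quorum_intersection : ∀ q₁ q₂ : quorum, ∃ n, member n q₁ ∧ member n q₂)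
    (proposal_unique : ∀ r v₁ v₂, propose_msg r v₁ → propose_msg r v₂ → v₁ = v₂)
    (vote_proposal : ∀ n r v, vote_msg n r v → propose_msg r v)
    (decision_quorum : ∀ n r v, decision n r v →
      ∃ q, ∀ m, member m q → vote_msg m r v)
    (choosable_proposal : ∀ (r₁ r₂ : round) (v₁ v₂ : value) (q : quorum),
      propose_msg r₂ v₂ → r₁ < r₂ → v₁ ≠ v₂ →
      ∃ n, member n q ∧ ¬vote_msg n r₁ v₁ ∧ left_round n r₁)
    (n₁ n₂ : node) (r₁ r₂ : round) (v₁ v₂ : value)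
    (h₁ : decision n₁ r₁ v₁) (h₂ : decision n₂ r₂ v₂) :
    v₁ = v₂ := by
  obtain ⟨q₁, hq₁⟩ := decision_quorum _ _ _ h₁
  obtain ⟨q₂, hq₂⟩ := decision_quorum _ _ _ h₂
  obtain ⟨m, hm₁, hm₂⟩ := quorum_intersection q₁ q₂
  have hv₁ := vote_proposal _ _ _ (hq₁ m hm₁)
  have hv₂ := vote_proposal _ _ _ (hq₂ m hm₂)
  rcases lt_trichotomy r₁ r₂ with h | h | h
  · by_contra hne
    obtain ⟨n, hn, hnv, _⟩ := choosable_proposal r₁ r₂ v₁ v₂ q₁ hv₂ h hne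
    exact hnv (hq₁ n hn)
  · exact proposal_unique r₁ v₁ v₂ hv₁ (h ▸ hv₂)
  · by_contra hne
    obtain ⟨n, hn, hnv, _⟩ := choosable_proposal r₂ r₁ v₂ v₁ q₂ hv₁ h (Ne.symm hne)
    exact hnv (hq₂ n hn)
end

section
/- The vote action of Paxos preserves the choosable-proposal invariant: if a state satisfies the invariant and a node n casts a vote for value v in round r where propose_msg(r, v) holds and ¬left_round(n, r), then the post-state (with vote_msg extended by (n, r, v)) still satisfies the choosable-proposal invariant. -/
/-- The `vote` action preserves the choosable-proposal invariant. -/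
theorem vote_preserves_choosable_invariant
    {node quorum round value : Type*} [LinearOrder round]
    (member : node → quorum → Prop)
    (vote_msg vote_msg' : node → round → value → Prop)
    (propose_msg : round → value → Prop)
    (left_round : node → round → Prop)
    (proposal_unique : ∀ r v₁ v₂, propose_msg r v₁ → propose_msg r v₂ → v₁ = v₂)
    (inv : ∀ (r₁ r₂ : round) (v₁ v₂ : value) (q : quorum),
      propose_msg r₂ v₂ → r₁ < r₂ → v₁ ≠ v₂ →
      ∃ n, member n q ∧ ¬vote_msg n r₁ v₁ ∧ left_round n r₁)
    (n : node) (r : round) (v : value)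
    (hpropose : propose_msg r v)
    (hleft : ¬left_round n r)
    (hupdate : ∀ m r' v', vote_msg' m r' v' ↔
      (vote_msg m r' v' ∨ (m = n ∧ r' = r ∧ v' = v))) :
    ∀ (r₁ r₂ : round) (v₁ v₂ : value) (q : quorum),
      propose_msg r₂ v₂ → r₁ < r₂ → v₁ ≠ v₂ →
      ∃ m, member m q ∧ ¬vote_msg' m r₁ v₁ ∧ left_round m r₁ := by
  intro r₁ r₂ v₁ v₂ q hp hlt hne
  obtain ⟨m, hm, hnv, hl⟩ := inv r₁ r₂ v₁ v₂ q hp hlt hne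
  refine ⟨m, hm, ?_, hl⟩
  rw [hupdate]
  rintro (h | ⟨rfl, rfl, rfl⟩)
  · exact hnv h
  · exact hleft hl
end

section
/- In the Multi-Paxos model, the safety property per instance follows from the per-instance inductive invariant: if for every instance i the conjuncts (unique proposals, votes follow proposals, decisions from quorums, and the choosable-proposal relation) hold, then any two decisions in the same instance agree on the value: decision(n₁, i, r₁, v₁) ∧ decision(n₂, i, r₂, v₂) → v₁ = v₂. -/
/-- In Multi-Paxos, under the per-instance inductive invariant, any two
decisions in the same instance agree on the value. -/
theorem multipaxos_decisions_agree
    {node quorum round value instance_ : Type*} [LinearOrder round]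
    (member : node → quorum → Prop)
    (propose_msg : instance_ → round → value → Prop)
    (vote_msg : node → instance_ → round → value → Prop)
    (decision : node → instance_ → round → value → Prop)
    (left_round : node → round → Prop)
    (quorum_intersection : ∀ q₁ q₂ : quorum, ∃ n, member n q₁ ∧ member n q₂)
    (proposal_unique : ∀ (i : instance_) (r : round) (v₁ v₂ : value),
      propose_msg i r v₁ → propose_msg i r v₂ → v₁ = v₂)
    (vote_proposal : ∀ (n : node) (i : instance_) (r : round) (v : value),
      vote_msg n i r v → propose_msg i r v)
    (decision_quorum : ∀ (n : node) (i : instance_) (r : round) (v : value),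
      decision n i r v → ∃ q, ∀ m, member m q → vote_msg m i r v)
    (choosable_proposal : ∀ (i : instance_) (r₁ r₂ : round) (v₁ v₂ : value) (q : quorum),
      propose_msg i r₂ v₂ → r₁ < r₂ → v₁ ≠ v₂ →
      ∃ n, member n q ∧ ¬vote_msg n i r₁ v₁ ∧ left_round n r₁) :
    ∀ (i : instance_) (n₁ n₂ : node) (r₁ r₂ : round) (v₁ v₂ : value),
      decision n₁ i r₁ v₁ → decision n₂ i r₂ v₂ → v₁ = v₂ := by
  have key : ∀ (i : instance_) (n₁ n₂ : node) (r₁ r₂ : round) (v₁ v₂ : value),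
      r₁ ≤ r₂ → decision n₁ i r₁ v₁ → decision n₂ i r₂ v₂ → v₁ = v₂ := by
    intro i n₁ n₂ r₁ r₂ v₁ v₂ hle h₁ h₂
    obtain ⟨q₁, hq₁⟩ := decision_quorum _ _ _ _ h₁
    obtain ⟨q₂, hq₂⟩ := decision_quorum _ _ _ _ h₂
    rcases eq_or_lt_of_le hle with rfl | hlt
    · obtain ⟨n, hn₁, hn₂⟩ := quorum_intersection q₁ q₂
      exact proposal_unique i r₁ v₁ v₂ (vote_proposal _ _ _ _ (hq₁ n hn₁))
        (vote_proposal _ _ _ _ (hq₂ n hn₂))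
    · by_contra hne
      obtain ⟨m, hmq⟩ := quorum_intersection q₂ q₂
      have hp₂ : propose_msg i r₂ v₂ := vote_proposal _ _ _ _ (hq₂ m hmq.1)
      obtain ⟨n, hnq, hnv, _⟩ := choosable_proposal i r₁ r₂ v₁ v₂ q₁ hp₂ hlt hne
      exact hnv (hq₁ n hnq)
  intro i n₁ n₂ r₁ r₂ v₁ v₂ h₁ h₂
  rcases le_total r₁ r₂ with h | h
  · exact key i n₁ n₂ r₁ r₂ v₁ v₂ h h₁ h₂
  · exact (key i n₂ n₁ r₂ r₁ v₂ v₁ h h₂ h₁).symm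
end
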